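/- Let a be a positive bounded operator on a complex Hilbert space with a ≥ λ for some real λ > 0 (so a is boundedly invertible). If a² − 1 is trace class, then a − 1 is trace class. -/

import Mathlib

noncomputable section

universe u v w

/-- The square root of a (positive) bounded operator on a complex Hilbert space, given by the
continuous functional calculus applied to `Real.sqrt`; for a positive operator this is its
unique positive square root. -/
noncomputable def opSqrt {H : Type u} [NormedAddCommGroup H] [InnerProductSpace ℂ H]
    [CompleteSpace H] (A : H →L[ℂ] H) : H →L[ℂ] H :=
  cfc Real.sqrt A

/-- The absolute value `|T| := √(T† T)` of a bounded operator on a complex Hilbert space. -/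
noncomputable def opAbs {H : Type u} [NormedAddCommGroup H] [InnerProductSpace ℂ H]
    [CompleteSpace H] (T : H →L[ℂ] H) : H →L[ℂ] H :=
  opSqrt (ContinuousLinearMap.adjoint T ∘L T)

/-- A bounded operator on a complex Hilbert space is **trace class** if for some (equivalently,
every) Hilbert orthonormal basis `(e i)`, the family `i ↦ ⟪e i, |T| (e i)⟫` is summable. -/
def IsTraceClass {H : Type u} [NormedAddCommGroup H] [InnerProductSpace ℂ H] [CompleteSpace H]
    (T : H →L[ℂ] H) : Prop :=
  ∃ (ι : Type u) (b : HilbertBasis ι ℂ H), Summable fun i => (inner ℂ (b i) (opAbs T (b i)) : ℂ)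

/-! For `0 ≤ a`, both `a - 1` and `a * a - 1` are real functions of `a`, so their absolute values
are `|t - 1|` and `|t² - 1| = |t - 1| (t + 1)` applied to `a`. On the spectrum of `a`, contained in
`[0, ∞)`, the first is bounded by the second, hence `|a - 1| ≤ |a² - 1|` as operators, and the
diagonal of `|a - 1|` along a basis witnessing that `a² - 1` is trace class is dominated termwise
by a summable one. -/

open ContinuousLinearMap
open scoped ComplexOrder

lemma abs_sub_one_le_abs_mul_self_sub_one {t : ℝ} (ht : 0 ≤ t) : |t - 1| ≤ |t * t - 1| := by
  rw [show t * t - 1 = (t - 1) * (t + 1) by ring, abs_mul, abs_of_pos (by linarith : 0 < t + 1)]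
  exact le_mul_of_one_le_right (abs_nonneg _) (by linarith)

section

variable {H : Type u} [NormedAddCommGroup H] [InnerProductSpace ℂ H]

lemma summable_inner_apply_of_nonneg_of_le {ι : Type*} {A B : H →L[ℂ] H} (hA : 0 ≤ A)
    (hAB : A ≤ B) (v : ι → H) (hB : Summable fun i => inner ℂ (v i) (B (v i))) :
    Summable fun i => inner ℂ (v i) (A (v i)) := by
  refine .of_norm_bounded (summable_norm_iff.mpr hB) fun i => ?_
  have hA_i : 0 ≤ inner ℂ (v i) (A (v i)) :=
    ((nonneg_iff_isPositive A).mp hA).inner_nonneg_right (v i)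
  have hAB_i : 0 ≤ inner ℂ (v i) ((B - A) (v i)) := hAB.inner_nonneg_right (v i)
  rw [sub_apply, inner_sub_right, sub_nonneg] at hAB_i
  exact CStarAlgebra.norm_le_norm_of_nonneg_of_le hA_i hAB_i

variable [CompleteSpace H]

lemma opAbs_nonneg (T : H →L[ℂ] H) : 0 ≤ opAbs T :=
  cfc_nonneg fun t _ => Real.sqrt_nonneg t

lemma opAbs_cfc (f : ℝ → ℝ) (a : H →L[ℂ] H) (ha : IsSelfAdjoint a)
    (hf : Continuous f := by fun_prop) :
    opAbs (cfc f a) = cfc (fun t => |f t|) a := by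
  have hsa : IsSelfAdjoint (cfc f a) := cfc_predicate f a
  rw [opAbs, opSqrt, ← star_eq_adjoint, hsa.star_eq]
  change cfc Real.sqrt (cfc f a * cfc f a) = _
  rw [← cfc_mul f f a, ← cfc_comp' Real.sqrt (fun t => f t * f t) a]
  exact cfc_congr fun t _ => Real.sqrt_mul_self_eq_abs (f t)

lemma opAbs_sub_one_le_opAbs_mul_self_sub_one {a : H →L[ℂ] H} (ha : 0 ≤ a) :
    opAbs (a - 1) ≤ opAbs (a * a - 1) := by
  have hsa : IsSelfAdjoint a := IsSelfAdjoint.of_nonneg ha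
  have h₁ : a - 1 = cfc (fun t : ℝ => t - 1) a := by
    rw [cfc_sub .., cfc_id' ℝ a, cfc_const_one ℝ a]
  have h₂ : a * a - 1 = cfc (fun t : ℝ => t * t - 1) a := by
    rw [cfc_sub .., cfc_mul .., cfc_id' ℝ a, cfc_const_one ℝ a]
  rw [h₁, h₂, opAbs_cfc _ a hsa, opAbs_cfc _ a hsa]
  exact cfc_mono fun t ht => abs_sub_one_le_abs_mul_self_sub_one (spectrum_nonneg_of_nonneg ha ht)

lemma IsTraceClass.of_opAbs_le {S T : H →L[ℂ] H} (h : opAbs S ≤ opAbs T)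
    (hT : IsTraceClass T) : IsTraceClass S :=
  let ⟨ι, b, hb⟩ := hT
  ⟨ι, b, summable_inner_apply_of_nonneg_of_le (opAbs_nonneg S) h b hb⟩

end

theorem traceClass_of_sq_traceClass
    {H : Type u} [NormedAddCommGroup H] [InnerProductSpace ℂ H] [CompleteSpace H]
    (a : H →L[ℂ] H) (ha : a.IsPositive)
    (hsq : IsTraceClass (a * a - 1)) :
    IsTraceClass (a - 1) :=
  hsq.of_opAbs_le (opAbs_sub_one_le_opAbs_mul_self_sub_one ((nonneg_iff_isPositive a).mpr ha))
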